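/- arXiv:2407.16985 — 3 statements merged into one kernel-verified Lean document; each statement's English description precedes it below -/
import Mathlib

section
/- Let S ∈ ℝ^{d×d} be symmetric positive semidefinite, let W ∈ ℝ^{d×d} be a diagonal matrix with strictly positive diagonal entries, let λ > 0 and η ∈ ℝ. Then the matrix S + λW is invertible, and the matrix A₀ = (S − (η/2)I_d)(S + λW)⁻¹ is a global minimizer over ℝ^{d×d} of the function f(A) = Tr(A S Aᵀ) − 2 Tr(S A) + λ Tr(A W Aᵀ) + η Tr(A); that is, f(A₀) ≤ f(A) for every A ∈ ℝ^{d×d}. -/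
open Matrix

lemma psd_add_pd {d : ℕ} {M N : Matrix (Fin d) (Fin d) ℝ}
    (hM : M.PosSemidef) (hN : N.PosDef) : (M + N).PosDef := by
  exact Matrix.PosDef.posSemidef_add hM hN

lemma psd_trace_nonneg {d : ℕ} {M : Matrix (Fin d) (Fin d) ℝ}
    (h : M.PosSemidef) : 0 ≤ M.trace := by
  exact h.trace_nonneg

lemma key_min {d : ℕ} {M C : Matrix (Fin d) (Fin d) ℝ} (hM : M.PosDef) (hC : Cᵀ = C)
    (A : Matrix (Fin d) (Fin d) ℝ) :
    Matrix.trace ((C * M⁻¹) * M * (C * M⁻¹)ᵀ) - 2 * Matrix.trace (C * (C * M⁻¹)) ≤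
      Matrix.trace (A * M * Aᵀ) - 2 * Matrix.trace (C * A) := by
  have hdet : IsUnit M.det := hM.det_pos.ne'.isUnit
  have hMt : Mᵀ = M := by
    have := hM.1.eq
    rwa [conjTranspose_eq_transpose_of_trivial] at this
  have hMinvt : (M⁻¹)ᵀ = M⁻¹ := by rw [transpose_nonsing_inv, hMt]
  have hMM : M⁻¹ * M = 1 := nonsing_inv_mul M hdet
  have hMM' : M * M⁻¹ = 1 := mul_nonsing_inv M hdet
  set A₀ := C * M⁻¹ with hA₀
  have hT1 : Matrix.trace (A * M * A₀ᵀ) = Matrix.trace (C * A) := by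
    rw [hA₀, transpose_mul, hMinvt, hC, ← Matrix.mul_assoc, Matrix.mul_assoc A M M⁻¹, hMM',
      Matrix.mul_one, Matrix.trace_mul_comm]
  have hT2 : Matrix.trace (A₀ * M * Aᵀ) = Matrix.trace (C * A) := by
    rw [hA₀, Matrix.mul_assoc C M⁻¹ M, hMM, Matrix.mul_one]
    rw [← Matrix.trace_transpose (C * Aᵀ), transpose_mul, transpose_transpose, hC,
      Matrix.trace_mul_comm]
  have hT3 : Matrix.trace (A₀ * M * A₀ᵀ) = Matrix.trace (C * A₀) := by
    rw [hA₀, Matrix.mul_assoc C M⁻¹ M, hMM, Matrix.mul_one, transpose_mul, hMinvt, hC,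
      ← Matrix.mul_assoc, Matrix.trace_mul_comm, ← Matrix.mul_assoc]
  have hpsd : ((A - A₀) * M * (A - A₀)ᵀ).PosSemidef := by
    have := hM.posSemidef.mul_mul_conjTranspose_same (A - A₀)
    rwa [conjTranspose_eq_transpose_of_trivial] at this
  have hkey : (A - A₀) * M * (A - A₀)ᵀ
      = A * M * Aᵀ - A * M * A₀ᵀ - A₀ * M * Aᵀ + A₀ * M * A₀ᵀ := by
    rw [transpose_sub]
    noncomm_ring
  have h0 := psd_trace_nonneg hpsd
  rw [hkey] at h0
  simp only [Matrix.trace_add, Matrix.trace_sub] at h0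
  rw [hT1, hT2, hT3] at h0
  linarith

/-- Closed-form update of the reweighted objective (core update step of STPCA-DP/STPCA-MP):
for `S` symmetric PSD, `W` diagonal with strictly positive diagonal, `λ > 0` and `η ∈ ℝ`,
the matrix `S + λW` is invertible, and `A₀ = (S − (η/2)I)(S + λW)⁻¹` globally minimizes
`f(A) = Tr(A S Aᵀ) − 2 Tr(S A) + λ Tr(A W Aᵀ) + η Tr(A)` over `ℝ^{d×d}`. -/
theorem stmt_4 (d : ℕ) (S W : Matrix (Fin d) (Fin d) ℝ) (hS : S.PosSemidef)
    (w : Fin d → ℝ) (hw : ∀ j, 0 < w j) (hW : W = Matrix.diagonal w)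
    (lam η : ℝ) (hlam : 0 < lam) :
    IsUnit (S + lam • W) ∧
      ∀ A : Matrix (Fin d) (Fin d) ℝ,
        (fun B : Matrix (Fin d) (Fin d) ℝ =>
            Matrix.trace (B * S * Bᵀ) - 2 * Matrix.trace (S * B)
              + lam * Matrix.trace (B * W * Bᵀ) + η * Matrix.trace B)
          ((S - (η / 2) • (1 : Matrix (Fin d) (Fin d) ℝ)) * (S + lam • W)⁻¹) ≤
        (fun B : Matrix (Fin d) (Fin d) ℝ =>
            Matrix.trace (B * S * Bᵀ) - 2 * Matrix.trace (S * B)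
              + lam * Matrix.trace (B * W * Bᵀ) + η * Matrix.trace B) A := by
  set M := S + lam • W with hMdef
  set C := S - (η / 2) • (1 : Matrix (Fin d) (Fin d) ℝ) with hCdef
  have hWpd : (lam • W).PosDef := by
    rw [hW, ← Matrix.diagonal_smul]
    exact Matrix.PosDef.diagonal fun i => by
      simpa using mul_pos hlam (hw i)
  have hM : M.PosDef := psd_add_pd hS hWpd
  have hSt : Sᵀ = S := by
    have := hS.1.eq
    rwa [conjTranspose_eq_transpose_of_trivial] at this
  have hC : Cᵀ = C := by
    rw [hCdef, transpose_sub, hSt, transpose_smul, transpose_one]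
  refine ⟨hM.isUnit, fun A => ?_⟩
  simp only
  have hf : ∀ B : Matrix (Fin d) (Fin d) ℝ,
      Matrix.trace (B * S * Bᵀ) - 2 * Matrix.trace (S * B)
        + lam * Matrix.trace (B * W * Bᵀ) + η * Matrix.trace B
      = Matrix.trace (B * M * Bᵀ) - 2 * Matrix.trace (C * B) := by
    intro B
    have h1 : B * M * Bᵀ = B * S * Bᵀ + lam • (B * W * Bᵀ) := by
      rw [hMdef]
      simp [Matrix.mul_add, Matrix.add_mul, Matrix.mul_smul, Matrix.smul_mul]
    have h2 : C * B = S * B - (η / 2) • B := by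
      rw [hCdef]
      simp [Matrix.sub_mul, Matrix.smul_mul]
    rw [h1, h2]
    simp only [Matrix.trace_add, Matrix.trace_sub, Matrix.trace_smul, smul_eq_mul]
    ring
  rw [hf, hf]
  exact key_min hM hC A
end

section
/- Let b, t, k ∈ ℕ with k ≤ b, and let λ > 0. Suppose X, Y ∈ ℂ^{b×t} admit simultaneous singular value decompositions X = V D Mᴴ and Y = V P Mᴴ, where V ∈ ℂ^{b×b} and M ∈ ℂ^{t×t} are unitary and D, P ∈ ℂ^{b×t} are rectangular diagonal matrices (entries zero off the diagonal) with real nonnegative diagonal entries. If (U*, Q*) with U*, Q* ∈ ℂ^{k×b} is a global minimizer of F(U, Q) = ‖X − Uᴴ Q Y‖_F² + λ Σ_{j=1}^{k} ‖q^j‖₂ over all Q ∈ ℂ^{k×b} and all U ∈ ℂ^{k×b} satisfying UUᴴ = I_k (where q^j denotes the j-th row of Q), then the b×b matrix (U*)ᴴ Q* is Hermitian positive semidefinite. -/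
open Matrix
open scoped ComplexOrder

/-- Objective of the sparse regression subproblem of STPCA-DP (matrix form):
`F(U, Q) = ‖X − Uᴴ Q Y‖_F² + λ Σ_{j=1}^{k} ‖q^j‖₂`, where `q^j` is the `j`-th row of `Q`. -/
noncomputable def stpcaObj (b t k : ℕ) (X Y : Matrix (Fin b) (Fin t) ℂ) (lam : ℝ)
    (U Q : Matrix (Fin k) (Fin b) ℂ) : ℝ :=
  (∑ i, ∑ j, ‖(X - Uᴴ * Q * Y) i j‖ ^ 2) +
    lam * ∑ j : Fin k, Real.sqrt (∑ i : Fin b, ‖Q j i‖ ^ 2)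

namespace STPCA6

/-- optimal diagonal weight -/
noncomputable def nuF (lam sv p2v : ℝ) : ℝ := max (2 * sv - lam) 0 / (2 * p2v)

/-- per-coordinate gain -/
noncomputable def hF (lam sv p2v : ℝ) : ℝ := (max (2 * sv - lam) 0) ^ 2 / (4 * p2v)

lemma nuF_nonneg (lam sv p2v : ℝ) (hp : 0 ≤ p2v) : 0 ≤ nuF lam sv p2v :=
  div_nonneg (le_max_right _ _) (by linarith)

lemma hF_nonneg (lam sv p2v : ℝ) (hp : 0 ≤ p2v) : 0 ≤ hF lam sv p2v :=
  div_nonneg (sq_nonneg _) (by linarith)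

lemma hF_of_s_eq_zero (lam p2v : ℝ) (hlam : 0 < lam) : hF lam 0 p2v = 0 := by
  unfold hF
  rw [max_eq_right (by linarith)]
  simp

lemma quad_nonneg (lam p2v sv av nv : ℝ) (hlam : 0 < lam) (hp : 0 ≤ p2v)
    (hps : p2v = 0 → sv = 0) (ha : 0 ≤ av) (hn : 0 ≤ nv) :
    0 ≤ p2v * nv ^ 2 - (2 * sv - lam) * (av * nv) + hF lam sv p2v * av ^ 2 := by
  unfold hF
  rcases eq_or_lt_of_le hp with hp0 | hp0
  · have hs0 : sv = 0 := hps hp0.symm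
    have hmx : max (2 * sv - lam) 0 = 0 := max_eq_right (by rw [hs0]; linarith)
    rw [hmx, ← hp0, hs0]
    norm_num
    nlinarith [mul_nonneg ha hn, hlam.le]
  · rcases le_or_gt (2 * sv - lam) 0 with hm | hm
    · have hmx : max (2 * sv - lam) 0 = 0 := max_eq_right hm
      rw [hmx]
      norm_num
      have t1 : 0 ≤ p2v * nv ^ 2 := mul_nonneg hp0.le (sq_nonneg _)
      have t2 : 0 ≤ (lam - 2 * sv) * (av * nv) := mul_nonneg (by linarith) (mul_nonneg ha hn)
      nlinarith [t1, t2]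
    · have hmx : max (2 * sv - lam) 0 = 2 * sv - lam := max_eq_left (le_of_lt hm)
      rw [hmx]
      have hp4 : (0:ℝ) < 4 * p2v := by linarith
      have key : p2v * nv ^ 2 - (2 * sv - lam) * (av * nv) + (2 * sv - lam) ^ 2 / (4 * p2v) * av ^ 2
          = (2 * p2v * nv - (2 * sv - lam) * av) ^ 2 / (4 * p2v) := by
        field_simp
        ring
      rw [key]
      positivity

lemma quad_at_nu (lam p2v sv : ℝ) (hlam : 0 < lam) (hp : 0 ≤ p2v) (hps : p2v = 0 → sv = 0) :
    p2v * nuF lam sv p2v ^ 2 - 2 * sv * nuF lam sv p2v + lam * nuF lam sv p2v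
      = -hF lam sv p2v := by
  unfold hF nuF
  rcases eq_or_lt_of_le hp with hp0 | hp0
  · have hs0 : sv = 0 := hps hp0.symm
    have hmx : max (2 * sv - lam) 0 = 0 := max_eq_right (by rw [hs0]; linarith)
    rw [hmx, ← hp0]
    simp
  · rcases le_or_gt (2 * sv - lam) 0 with hm | hm
    · have hmx : max (2 * sv - lam) 0 = 0 := max_eq_right hm
      rw [hmx]; simp
    · have hmx : max (2 * sv - lam) 0 = 2 * sv - lam := max_eq_left (le_of_lt hm)
      rw [hmx]
      field_simp
      ring

lemma exists_topk (n : ℕ) (f : Fin n → ℝ) : ∀ (k : ℕ), k ≤ n →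
    ∃ T : Finset (Fin n), T.card = k ∧ ∀ i ∈ T, ∀ j, j ∉ T → f j ≤ f i := by
  intro k
  induction k with
  | zero => exact fun _ => ⟨∅, rfl, by simp⟩
  | succ m ih =>
    intro hk
    obtain ⟨T, hcard, hprop⟩ := ih (Nat.le_of_succ_le hk)
    have hne : (Tᶜ : Finset (Fin n)).Nonempty := by
      rw [← Finset.card_pos, Finset.card_compl, hcard, Fintype.card_fin]
      omega
    obtain ⟨j₀, hj₀, hmax⟩ := Finset.exists_max_image Tᶜ f hne
    have hj₀T : j₀ ∉ T := Finset.mem_compl.mp hj₀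
    refine ⟨insert j₀ T, by rw [Finset.card_insert_of_notMem hj₀T, hcard], ?_⟩
    intro i hi j hj
    have hjT : j ∉ T := fun hjT => hj (Finset.mem_insert_of_mem hjT)
    have hjc : j ∈ Tᶜ := Finset.mem_compl.mpr hjT
    rcases Finset.mem_insert.mp hi with rfl | hiT
    · exact hmax j hjc
    · exact hprop i hiT j hjT

lemma knapsack (n : ℕ) (h w : Fin n → ℝ) (T : Finset (Fin n)) (hh : ∀ i, 0 ≤ h i)
    (hw0 : ∀ i, 0 ≤ w i) (hw1 : ∀ i, w i ≤ 1) (hsum : ∑ i, w i = T.card)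
    (htop : ∀ i ∈ T, ∀ j, j ∉ T → h j ≤ h i) :
    ∑ i, h i * w i ≤ ∑ i ∈ T, h i := by
  rcases T.eq_empty_or_nonempty with rfl | hTne
  · simp only [Finset.card_empty, Nat.cast_zero] at hsum
    have hz : ∀ i ∈ Finset.univ, w i = 0 :=
      (Finset.sum_eq_zero_iff_of_nonneg (fun i _ => hw0 i)).mp hsum
    have : ∀ i ∈ Finset.univ, h i * w i = 0 := fun i hi => by rw [hz i hi, mul_zero]
    rw [Finset.sum_congr rfl this]
    simp
  · obtain ⟨t₀, ht₀, hmin⟩ := Finset.exists_min_image T h hTne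
    have split : ∑ i, h i * w i = ∑ i ∈ T, h i * w i + ∑ i ∈ Tᶜ, h i * w i :=
      (Finset.sum_add_sum_compl T _).symm
    have hcompl : ∑ i ∈ Tᶜ, h i * w i ≤ h t₀ * ∑ i ∈ Tᶜ, w i := by
      rw [Finset.mul_sum]
      refine Finset.sum_le_sum ?_
      intro i hi
      exact mul_le_mul_of_nonneg_right (htop t₀ ht₀ i (Finset.mem_compl.mp hi)) (hw0 i)
    have hcw : ∑ i ∈ Tᶜ, w i = (T.card : ℝ) - ∑ i ∈ T, w i := by
      have := Finset.sum_add_sum_compl T w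
      rw [hsum] at this
      linarith
    have hcard : (T.card : ℝ) = ∑ _i ∈ T, (1 : ℝ) := by simp
    have final : ∑ i ∈ T, h i * w i + h t₀ * ((∑ _i ∈ T, (1:ℝ)) - ∑ i ∈ T, w i) ≤ ∑ i ∈ T, h i := by
      rw [mul_sub, Finset.mul_sum, Finset.mul_sum, ← Finset.sum_sub_distrib, ← Finset.sum_add_distrib]
      refine Finset.sum_le_sum ?_
      intro i hi
      have h1 : h t₀ ≤ h i := hmin i hi
      have h2 : w i ≤ 1 := hw1 i
      have h3 : 0 ≤ w i := hw0 i
      nlinarith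
    calc ∑ i, h i * w i = ∑ i ∈ T, h i * w i + ∑ i ∈ Tᶜ, h i * w i := split
      _ ≤ ∑ i ∈ T, h i * w i + h t₀ * ∑ i ∈ Tᶜ, w i := by linarith
      _ ≤ ∑ i ∈ T, h i := by rw [hcw, hcard] at *; linarith [final]

lemma cs_eq (n : ℕ) (a v : Fin n → ℝ) (ha : ∑ i, a i ^ 2 = 1)
    (heq : ∑ i, a i * v i = Real.sqrt (∑ i, v i ^ 2)) :
    ∀ i, v i = Real.sqrt (∑ i, v i ^ 2) * a i := by
  set c := Real.sqrt (∑ i, v i ^ 2) with hc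
  have hv2 : (0:ℝ) ≤ ∑ i, v i ^ 2 := Finset.sum_nonneg fun i _ => sq_nonneg _
  have hc2 : c ^ 2 = ∑ i, v i ^ 2 := Real.sq_sqrt hv2
  have key : ∑ i, (v i - c * a i) ^ 2 = 0 := by
    have expand : ∀ i, (v i - c * a i) ^ 2 = v i ^ 2 - 2 * c * (a i * v i) + c ^ 2 * a i ^ 2 :=
      fun i => by ring
    rw [Finset.sum_congr rfl fun i _ => expand i, Finset.sum_add_distrib, Finset.sum_sub_distrib,
      ← Finset.mul_sum, ← Finset.mul_sum, heq, ha, ← hc2]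
    ring
  intro i
  have := (Finset.sum_eq_zero_iff_of_nonneg (fun i _ => sq_nonneg (v i - c * a i))).mp key i
    (Finset.mem_univ i)
  have := sq_eq_zero_iff.mp this
  linarith

lemma cs_le (n : ℕ) (a v : Fin n → ℝ) (ha : ∑ i, a i ^ 2 = 1)
    (h0 : ∀ i, 0 ≤ a i) (hv : ∀ i, 0 ≤ v i) :
    ∑ i, a i * v i ≤ Real.sqrt (∑ i, v i ^ 2) := by
  have hnn : (0:ℝ) ≤ ∑ i, a i * v i := Finset.sum_nonneg fun i _ => mul_nonneg (h0 i) (hv i)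
  have hsq : (∑ i, a i * v i) ^ 2 ≤ ∑ i, v i ^ 2 := by
    have := Finset.sum_mul_sq_le_sq_mul_sq Finset.univ a v
    rwa [ha, one_mul] at this
  calc ∑ i, a i * v i = Real.sqrt ((∑ i, a i * v i) ^ 2) := (Real.sqrt_sq hnn).symm
    _ ≤ Real.sqrt (∑ i, v i ^ 2) := Real.sqrt_le_sqrt hsq

lemma complex_eq_of_re_eq_norm (z : ℂ) (h : z.re = ‖z‖) : z = (‖z‖ : ℂ) := by
  have h2 : z.re ^ 2 + z.im ^ 2 = ‖z‖ ^ 2 := by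
    rw [Complex.sq_norm, Complex.normSq_apply]
    ring
  have h' : z.re ^ 2 = ‖z‖ ^ 2 := by rw [h]
  have him2 : z.im ^ 2 = 0 := by linarith
  have him : z.im = 0 := sq_eq_zero_iff.mp him2
  apply Complex.ext
  · simpa using h
  · simpa using him

lemma re_mul_star_self (z : ℂ) : (z * star z).re = ‖z‖ ^ 2 := by
  have : z * star z = ((Complex.normSq z : ℝ) : ℂ) := Complex.mul_conj z
  rw [this, Complex.ofReal_re, ← Complex.sq_norm]

lemma row_sum_sq {k b : ℕ} (A : Matrix (Fin k) (Fin b) ℂ) (j : Fin k) :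
    ∑ i, ‖A j i‖ ^ 2 = ((A * Aᴴ) j j).re := by
  rw [Matrix.mul_apply, Complex.re_sum]
  refine Finset.sum_congr rfl fun i _ => ?_
  rw [Matrix.conjTranspose_apply, re_mul_star_self]

lemma sum_sq_eq_re_trace {n m : ℕ} (N : Matrix (Fin n) (Fin m) ℂ) :
    ∑ i, ∑ j, ‖N i j‖ ^ 2 = (Matrix.trace (N * Nᴴ)).re := by
  rw [Matrix.trace, Complex.re_sum]
  refine Finset.sum_congr rfl fun i _ => ?_
  rw [Matrix.diag_apply, Matrix.mul_apply, Complex.re_sum]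
  refine Finset.sum_congr rfl fun j _ => ?_
  rw [Matrix.conjTranspose_apply, re_mul_star_self]

lemma diag_prod {b t : ℕ} (Pm Dm : Matrix (Fin b) (Fin t) ℂ)
    (hPdiag : ∀ (i : Fin b) (j : Fin t), (i : ℕ) ≠ (j : ℕ) → Pm i j = 0)
    (hPreal : ∀ (i : Fin b) (j : Fin t), (Pm i j).im = 0)
    (hDdiag : ∀ (i : Fin b) (j : Fin t), (i : ℕ) ≠ (j : ℕ) → Dm i j = 0)
    (hDreal : ∀ (i : Fin b) (j : Fin t), (Dm i j).im = 0) :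
    Pm * Dmᴴ = Matrix.diagonal (fun i => ((∑ j, (Pm i j).re * (Dm i j).re : ℝ) : ℂ)) := by
  ext i m
  rw [Matrix.mul_apply]
  by_cases him : i = m
  · subst him
    rw [Matrix.diagonal_apply_eq, Complex.ofReal_sum]
    refine Finset.sum_congr rfl fun j _ => ?_
    rw [Matrix.conjTranspose_apply]
    have hP : Pm i j = ((Pm i j).re : ℂ) := Complex.ext rfl (by simp [hPreal i j])
    have hD : Dm i j = ((Dm i j).re : ℂ) := Complex.ext rfl (by simp [hDreal i j])
    rw [Complex.ofReal_mul, ← hP]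
    nth_rewrite 1 [hD]
    rw [Complex.star_def, Complex.conj_ofReal]
  · rw [Matrix.diagonal_apply_ne _ him]
    refine Finset.sum_eq_zero fun j _ => ?_
    by_cases hij : (i : ℕ) = (j : ℕ)
    · have hmj : (m : ℕ) ≠ (j : ℕ) := by
        intro hmj
        exact him (Fin.ext (by omega))
      rw [Matrix.conjTranspose_apply, hDdiag m j hmj, star_zero, mul_zero]
    · rw [hPdiag i j hij, zero_mul]

lemma main_identity (b t k : ℕ) (lam : ℝ)
    (X Y D P : Matrix (Fin b) (Fin t) ℂ)
    (V : Matrix (Fin b) (Fin b) ℂ) (M : Matrix (Fin t) (Fin t) ℂ)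
    (s p2 : Fin b → ℝ)
    (hV1 : V * Vᴴ = 1)
    (hM2 : Mᴴ * M = 1)
    (hX : X = V * D * Mᴴ) (hY : Y = V * P * Mᴴ)
    (hPD : P * Dᴴ = Matrix.diagonal (fun i => ((s i : ℝ) : ℂ)))
    (hPP : P * Pᴴ = Matrix.diagonal (fun i => ((p2 i : ℝ) : ℂ)))
    (U Q : Matrix (Fin k) (Fin b) ℂ) (hU : U * Uᴴ = 1) :
    stpcaObj b t k X Y lam U Q
      = (Matrix.trace (X * Xᴴ)).re
        + ∑ j : Fin k,
          ((∑ i, p2 i * ‖(Q * V) j i‖ ^ 2)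
            - 2 * (∑ i, s i * ((Q * V) j i * star ((U * V) j i)).re)
            + lam * Real.sqrt (∑ i, ‖(Q * V) j i‖ ^ 2)) := by
  have hYX : Y * Xᴴ = V * (Matrix.diagonal (fun i => ((s i : ℝ) : ℂ)) * Vᴴ) := by
    rw [hX, hY, ← hPD]
    simp only [Matrix.conjTranspose_mul, Matrix.conjTranspose_conjTranspose, Matrix.mul_assoc]
    rw [← Matrix.mul_assoc Mᴴ M, hM2, Matrix.one_mul]
  have hYY : Y * Yᴴ = V * (Matrix.diagonal (fun i => ((p2 i : ℝ) : ℂ)) * Vᴴ) := by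
    rw [hY, ← hPP]
    simp only [Matrix.conjTranspose_mul, Matrix.conjTranspose_conjTranspose, Matrix.mul_assoc]
    rw [← Matrix.mul_assoc Mᴴ M, hM2, Matrix.one_mul]
  set R := Q * V with hR
  set G := U * V with hG
  set Z := Uᴴ * Q * Y with hZ
  set sC : Fin b → ℂ := fun i => ((s i : ℝ) : ℂ) with hsC
  set p2C : Fin b → ℂ := fun i => ((p2 i : ℝ) : ℂ) with hp2C
  have hcross : (Matrix.trace (Z * Xᴴ)).re
      = ∑ j : Fin k, ∑ i : Fin b, s i * (R j i * star (G j i)).re := by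
    have e1 : Z * Xᴴ = Uᴴ * (Q * (V * (Matrix.diagonal sC * Vᴴ))) := by
      rw [hZ, Matrix.mul_assoc, Matrix.mul_assoc, ← hYX]
    have e2 : Matrix.trace (Z * Xᴴ) = Matrix.trace (R * (Matrix.diagonal sC * Gᴴ)) := by
      rw [e1, Matrix.trace_mul_comm]
      congr 1
      rw [hR, hG]
      simp only [Matrix.conjTranspose_mul, Matrix.mul_assoc]
    rw [e2, Matrix.trace, Complex.re_sum]
    refine Finset.sum_congr rfl fun j _ => ?_
    rw [Matrix.diag_apply, Matrix.mul_apply, Complex.re_sum]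
    refine Finset.sum_congr rfl fun i _ => ?_
    rw [Matrix.diagonal_mul, Matrix.conjTranspose_apply]
    have : R j i * (sC i * star (G j i)) = ((s i : ℝ) : ℂ) * (R j i * star (G j i)) := by
      rw [hsC]; ring
    rw [this, Complex.re_ofReal_mul]
  have hZZ : (Matrix.trace (Z * Zᴴ)).re = ∑ j : Fin k, ∑ i : Fin b, p2 i * ‖R j i‖ ^ 2 := by
    have e1 : Z * Zᴴ = Uᴴ * (Q * ((Y * Yᴴ) * (Qᴴ * U))) := by
      rw [hZ]
      simp only [Matrix.conjTranspose_mul, Matrix.conjTranspose_conjTranspose, Matrix.mul_assoc]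
    have e2 : Matrix.trace (Z * Zᴴ) = Matrix.trace (R * (Matrix.diagonal p2C * Rᴴ)) := by
      rw [e1, Matrix.trace_mul_comm]
      have e3 : Q * ((Y * Yᴴ) * (Qᴴ * U)) * Uᴴ = Q * ((Y * Yᴴ) * (Qᴴ * (U * Uᴴ))) := by
        simp only [Matrix.mul_assoc]
      rw [e3, hU, Matrix.mul_one, hYY]
      congr 1
      rw [hR]
      simp only [Matrix.conjTranspose_mul, Matrix.mul_assoc]
    rw [e2, Matrix.trace, Complex.re_sum]
    refine Finset.sum_congr rfl fun j _ => ?_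
    rw [Matrix.diag_apply, Matrix.mul_apply, Complex.re_sum]
    refine Finset.sum_congr rfl fun i _ => ?_
    rw [Matrix.diagonal_mul, Matrix.conjTranspose_apply]
    have : R j i * (p2C i * star (R j i)) = ((p2 i : ℝ) : ℂ) * (R j i * star (R j i)) := by
      rw [hp2C]; ring
    rw [this, Complex.re_ofReal_mul, re_mul_star_self]
  have hfrob : ∑ i, ∑ j, ‖(X - Uᴴ * Q * Y) i j‖ ^ 2
      = (Matrix.trace (X * Xᴴ)).re
        - 2 * (∑ j : Fin k, ∑ i : Fin b, s i * (R j i * star (G j i)).re)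
        + ∑ j : Fin k, ∑ i : Fin b, p2 i * ‖R j i‖ ^ 2 := by
    rw [show X - Uᴴ * Q * Y = X - Z from rfl, sum_sq_eq_re_trace]
    have hexp : (X - Z) * (X - Z)ᴴ = X * Xᴴ - X * Zᴴ - (Z * Xᴴ - Z * Zᴴ) := by
      rw [Matrix.conjTranspose_sub, Matrix.sub_mul, Matrix.mul_sub, Matrix.mul_sub]
    rw [hexp, Matrix.trace_sub, Matrix.trace_sub, Matrix.trace_sub]
    have hXZ : (Matrix.trace (X * Zᴴ)).re = (Matrix.trace (Z * Xᴴ)).re := by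
      have e : X * Zᴴ = (Z * Xᴴ)ᴴ := by simp [Matrix.conjTranspose_mul]
      rw [e, Matrix.trace_conjTranspose]
      simp [Complex.conj_re]
    simp only [Complex.sub_re]
    rw [hXZ, hcross, hZZ]
    ring
  have hpen : ∀ j : Fin k, (∑ i, ‖Q j i‖ ^ 2) = ∑ i, ‖R j i‖ ^ 2 := by
    intro j
    rw [row_sum_sq, row_sum_sq]
    have e : R * Rᴴ = Q * Qᴴ := by
      rw [hR]
      simp only [Matrix.conjTranspose_mul, Matrix.mul_assoc]
      rw [← Matrix.mul_assoc V Vᴴ Qᴴ, hV1, Matrix.one_mul]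
    rw [e]
  rw [stpcaObj, hfrob]
  simp only [hpen]
  rw [Finset.sum_add_distrib, Finset.sum_sub_distrib, ← Finset.mul_sum, ← Finset.mul_sum]
  ring

end STPCA6

set_option maxHeartbeats 2000000 in
open STPCA6 in
/-- **Theorem 1 of the paper.** Suppose `X = V D Mᴴ` and `Y = V P Mᴴ` are simultaneous SVDs
(`V`, `M` unitary, `D`, `P` rectangular diagonal with real nonnegative diagonal entries).
If `(U*, Q*)` globally minimizes `F(U, Q) = ‖X − Uᴴ Q Y‖_F² + λ Σ_j ‖q^j‖₂` over all `Q`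
and all `U` with `UUᴴ = I_k`, then `(U*)ᴴ Q*` is Hermitian positive semidefinite. -/
theorem stmt_6 (b t k : ℕ) (hk : k ≤ b) (lam : ℝ) (hlam : 0 < lam)
    (X Y D P : Matrix (Fin b) (Fin t) ℂ)
    (V : Matrix (Fin b) (Fin b) ℂ) (M : Matrix (Fin t) (Fin t) ℂ)
    (hV : V ∈ Matrix.unitaryGroup (Fin b) ℂ)
    (hM : M ∈ Matrix.unitaryGroup (Fin t) ℂ)
    (hX : X = V * D * Mᴴ) (hY : Y = V * P * Mᴴ)
    (hDdiag : ∀ (i : Fin b) (j : Fin t), (i : ℕ) ≠ (j : ℕ) → D i j = 0)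
    (hDreal : ∀ (i : Fin b) (j : Fin t), (D i j).im = 0 ∧ 0 ≤ (D i j).re)
    (hPdiag : ∀ (i : Fin b) (j : Fin t), (i : ℕ) ≠ (j : ℕ) → P i j = 0)
    (hPreal : ∀ (i : Fin b) (j : Fin t), (P i j).im = 0 ∧ 0 ≤ (P i j).re)
    (Ustar Qstar : Matrix (Fin k) (Fin b) ℂ)
    (hUstar : Ustar * Ustarᴴ = 1)
    (hmin : ∀ U Q : Matrix (Fin k) (Fin b) ℂ, U * Uᴴ = 1 →
      stpcaObj b t k X Y lam Ustar Qstar ≤ stpcaObj b t k X Y lam U Q) :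
    (Ustarᴴ * Qstar).PosSemidef := by
  classical
  have hV1 : V * Vᴴ = 1 := by
    have := (Matrix.mem_unitaryGroup_iff).mp hV
    simpa [Matrix.star_eq_conjTranspose] using this
  have hV2 : Vᴴ * V = 1 := by
    have := (Matrix.mem_unitaryGroup_iff').mp hV
    simpa [Matrix.star_eq_conjTranspose] using this
  have hM2 : Mᴴ * M = 1 := by
    have := (Matrix.mem_unitaryGroup_iff').mp hM
    simpa [Matrix.star_eq_conjTranspose] using this
  -- diagonal data
  set s : Fin b → ℝ := fun i => ∑ j, (P i j).re * (D i j).re with hsdef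
  set p2 : Fin b → ℝ := fun i => ∑ j, (P i j).re * (P i j).re with hp2def
  have hPD : P * Dᴴ = Matrix.diagonal (fun i => ((s i : ℝ) : ℂ)) :=
    diag_prod P D hPdiag (fun i j => (hPreal i j).1) hDdiag (fun i j => (hDreal i j).1)
  have hPP : P * Pᴴ = Matrix.diagonal (fun i => ((p2 i : ℝ) : ℂ)) :=
    diag_prod P P hPdiag (fun i j => (hPreal i j).1) hPdiag (fun i j => (hPreal i j).1)
  have hsnn : ∀ i, 0 ≤ s i := fun i =>
    Finset.sum_nonneg fun j _ => mul_nonneg (hPreal i j).2 (hDreal i j).2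
  have hp2nn : ∀ i, 0 ≤ p2 i := fun i =>
    Finset.sum_nonneg fun j _ => mul_self_nonneg _
  have hps : ∀ i, p2 i = 0 → s i = 0 := by
    intro i hp0
    have hz : ∀ j ∈ Finset.univ, (P i j).re * (P i j).re = 0 :=
      (Finset.sum_eq_zero_iff_of_nonneg (fun j _ => mul_self_nonneg _)).mp hp0
    refine Finset.sum_eq_zero fun j hj => ?_
    rw [mul_self_eq_zero.mp (hz j hj), zero_mul]
  set hh : Fin b → ℝ := fun i => hF lam (s i) (p2 i) with hhdef
  set nu : Fin b → ℝ := fun i => nuF lam (s i) (p2 i) with hnudef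
  have hhnn : ∀ i, 0 ≤ hh i := fun i => hF_nonneg _ _ _ (hp2nn i)
  have hnunn : ∀ i, 0 ≤ nu i := fun i => nuF_nonneg _ _ _ (hp2nn i)
  -- the main identity specialised
  have main := fun (U Q : Matrix (Fin k) (Fin b) ℂ) (hU : U * Uᴴ = 1) =>
    main_identity b t k lam X Y D P V M s p2 hV1 hM2 hX hY hPD hPP U Q hU
  -- optimum in rotated coordinates
  set G := Ustar * V with hGdef
  set R := Qstar * V with hRdef
  have hGG : G * Gᴴ = 1 := by
    rw [hGdef]
    simp only [Matrix.conjTranspose_mul, Matrix.mul_assoc]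
    rw [← Matrix.mul_assoc V Vᴴ Ustarᴴ, hV1, Matrix.one_mul, hUstar]
  have hrowG : ∀ j, ∑ i, ‖G j i‖ ^ 2 = 1 := by
    intro j
    rw [row_sum_sq, hGG]
    simp [Matrix.one_apply]
  -- weights
  set w : Fin b → ℝ := fun i => ∑ j, ‖G j i‖ ^ 2 with hwdef
  have hw0 : ∀ i, 0 ≤ w i := fun i => Finset.sum_nonneg fun j _ => sq_nonneg _
  have hwsum : ∑ i, w i = (k : ℝ) := by
    have e : ∑ i, w i = ∑ j : Fin k, ∑ i, ‖G j i‖ ^ 2 := Finset.sum_comm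
    rw [e]
    simp only [hrowG]
    rw [Finset.sum_const, Finset.card_univ, Fintype.card_fin, nsmul_eq_mul, mul_one]
  have hw1 : ∀ i, w i ≤ 1 := by
    intro i
    set N := Gᴴ * G with hNdef
    have hNsym : Nᴴ = N := by
      rw [hNdef, Matrix.conjTranspose_mul, Matrix.conjTranspose_conjTranspose]
    have hNN : N * N = N := by
      rw [hNdef, Matrix.mul_assoc, ← Matrix.mul_assoc G Gᴴ G, hGG, Matrix.one_mul]
    have hwN : w i = (N i i).re := by
      rw [hwdef]
      simp only
      rw [show N i i = ∑ j, star (G j i) * (G j i) from by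
        rw [hNdef, Matrix.mul_apply]; exact Finset.sum_congr rfl fun j _ => by
          rw [Matrix.conjTranspose_apply]]
      rw [Complex.re_sum]
      exact Finset.sum_congr rfl fun j _ => by rw [mul_comm, re_mul_star_self]
    have hNii : (N i i).re = ∑ l, ‖N i l‖ ^ 2 := by
      conv_lhs => rw [← hNN]
      rw [Matrix.mul_apply, Complex.re_sum]
      refine Finset.sum_congr rfl fun l _ => ?_
      have : N l i = star (N i l) := by
        conv_lhs => rw [← hNsym]
        rw [Matrix.conjTranspose_apply]
      rw [this, re_mul_star_self]
    have hle : ‖N i i‖ ^ 2 ≤ ∑ l, ‖N i l‖ ^ 2 :=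
      Finset.single_le_sum (fun l _ => sq_nonneg ‖N i l‖) (Finset.mem_univ i)
    have habs : (N i i).re ≤ ‖N i i‖ := Complex.re_le_norm (N i i)
    nlinarith [hw0 i, hwN, hNii, hle, habs, norm_nonneg (N i i)]
  -- row terms of the optimum
  set rowTerm : Fin k → ℝ := fun j =>
    (∑ i, p2 i * ‖R j i‖ ^ 2) - 2 * (∑ i, s i * (R j i * star (G j i)).re)
      + lam * Real.sqrt (∑ i, ‖R j i‖ ^ 2) with hrtdef
  have hFopt : stpcaObj b t k X Y lam Ustar Qstar
      = (Matrix.trace (X * Xᴴ)).re + ∑ j, rowTerm j := main Ustar Qstar hUstar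
  have hReRG : ∀ (j : Fin k) (i : Fin b), (R j i * star (G j i)).re ≤ ‖G j i‖ * ‖R j i‖ := by
    intro j i
    have h1 := Complex.re_le_norm (R j i * star (G j i))
    rw [norm_mul, norm_star] at h1
    linarith [h1, mul_comm ‖R j i‖ ‖G j i‖]
  have hdecomp : ∀ j, rowTerm j + ∑ i, hh i * ‖G j i‖ ^ 2
      = lam * (Real.sqrt (∑ i, ‖R j i‖ ^ 2) - ∑ i, ‖G j i‖ * ‖R j i‖)
        + 2 * (∑ i, s i * (‖G j i‖ * ‖R j i‖ - (R j i * star (G j i)).re))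
        + ∑ i, (p2 i * ‖R j i‖ ^ 2 - (2 * s i - lam) * (‖G j i‖ * ‖R j i‖)
            + hh i * ‖G j i‖ ^ 2) := by
    intro j
    have e1 : ∑ i, s i * (‖G j i‖ * ‖R j i‖ - (R j i * star (G j i)).re)
        = (∑ i, s i * (‖G j i‖ * ‖R j i‖)) - ∑ i, s i * (R j i * star (G j i)).re := by
      rw [← Finset.sum_sub_distrib]
      exact Finset.sum_congr rfl fun i _ => by ring
    have e2 : ∑ i, (p2 i * ‖R j i‖ ^ 2 - (2 * s i - lam) * (‖G j i‖ * ‖R j i‖) + hh i * ‖G j i‖ ^ 2)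
        = (∑ i, p2 i * ‖R j i‖ ^ 2) - 2 * (∑ i, s i * (‖G j i‖ * ‖R j i‖))
          + lam * (∑ i, ‖G j i‖ * ‖R j i‖) + ∑ i, hh i * ‖G j i‖ ^ 2 := by
      rw [Finset.mul_sum, Finset.mul_sum, ← Finset.sum_sub_distrib, ← Finset.sum_add_distrib,
        ← Finset.sum_add_distrib]
      exact Finset.sum_congr rfl fun i _ => by ring
    simp only [hrtdef]
    rw [e1, e2]
    ring
  have hpiece1 : ∀ j, ∑ i, ‖G j i‖ * ‖R j i‖ ≤ Real.sqrt (∑ i, ‖R j i‖ ^ 2) := by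
    intro j
    exact cs_le b (fun i => ‖G j i‖) (fun i => ‖R j i‖) (hrowG j)
      (fun i => norm_nonneg _) (fun i => norm_nonneg _)
  have hpiece2 : ∀ (j : Fin k) (i : Fin b),
      0 ≤ s i * (‖G j i‖ * ‖R j i‖ - (R j i * star (G j i)).re) := fun j i =>
    mul_nonneg (hsnn i) (by linarith [hReRG j i])
  have hpiece3 : ∀ (j : Fin k) (i : Fin b),
      0 ≤ p2 i * ‖R j i‖ ^ 2 - (2 * s i - lam) * (‖G j i‖ * ‖R j i‖) + hh i * ‖G j i‖ ^ 2 :=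
    fun j i => quad_nonneg lam (p2 i) (s i) ‖G j i‖ ‖R j i‖ hlam (hp2nn i) (hps i)
      (norm_nonneg _) (norm_nonneg _)
  have hrow_nonneg : ∀ j, 0 ≤ rowTerm j + ∑ i, hh i * ‖G j i‖ ^ 2 := by
    intro j
    rw [hdecomp j]
    have n1 : 0 ≤ Real.sqrt (∑ i, ‖R j i‖ ^ 2) - ∑ i, ‖G j i‖ * ‖R j i‖ := by
      linarith [hpiece1 j]
    have n2 : 0 ≤ ∑ i, s i * (‖G j i‖ * ‖R j i‖ - (R j i * star (G j i)).re) :=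
      Finset.sum_nonneg fun i _ => hpiece2 j i
    have n3 : 0 ≤ ∑ i, (p2 i * ‖R j i‖ ^ 2 - (2 * s i - lam) * (‖G j i‖ * ‖R j i‖)
        + hh i * ‖G j i‖ ^ 2) := Finset.sum_nonneg fun i _ => hpiece3 j i
    linarith [mul_nonneg hlam.le n1]
  -- competitor
  obtain ⟨T, hTcard, hTtop⟩ := exists_topk b hh k hk
  set e : Fin k → Fin b := fun j => ((T.orderIsoOfFin hTcard) j : Fin b) with hedef
  have heT : ∀ j, e j ∈ T := fun j => ((T.orderIsoOfFin hTcard) j).2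
  have heinj : Function.Injective e := fun a a' hx =>
    (T.orderIsoOfFin hTcard).injective (Subtype.ext hx)
  have hVorth : ∀ a c : Fin b, (∑ i, star (V i a) * V i c) = if a = c then 1 else 0 := by
    intro a c
    have e0 := congrFun (congrFun hV2 a) c
    rw [Matrix.mul_apply, Matrix.one_apply] at e0
    rw [← e0]
    exact Finset.sum_congr rfl fun i _ => by rw [Matrix.conjTranspose_apply]
  set U0 : Matrix (Fin k) (Fin b) ℂ := fun j i => star (V i (e j)) with hU0def
  set Q0 : Matrix (Fin k) (Fin b) ℂ := fun j i => ((nu (e j) : ℝ) : ℂ) * star (V i (e j))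
    with hQ0def
  have hU0U0 : U0 * U0ᴴ = 1 := by
    ext j j'
    rw [Matrix.mul_apply, Matrix.one_apply]
    calc ∑ i, U0 j i * U0ᴴ i j' = ∑ i, star (V i (e j)) * V i (e j') := by
          refine Finset.sum_congr rfl fun i _ => ?_
          rw [Matrix.conjTranspose_apply, hU0def]
          simp
      _ = if e j = e j' then 1 else 0 := hVorth _ _
      _ = if j = j' then 1 else 0 := by
          by_cases hjj : j = j'
          · simp [hjj]
          · rw [if_neg (fun hx => hjj (heinj hx)), if_neg hjj]
  have hG0 : ∀ j i, (U0 * V) j i = if e j = i then 1 else 0 := by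
    intro j i
    rw [Matrix.mul_apply]
    have h1 : ∀ l, U0 j l * V l i = star (V l (e j)) * V l i := fun l => by rw [hU0def]
    rw [Finset.sum_congr rfl fun l _ => h1 l]
    exact hVorth (e j) i
  have hR0 : ∀ j i, (Q0 * V) j i = if e j = i then ((nu (e j) : ℝ) : ℂ) else 0 := by
    intro j i
    rw [Matrix.mul_apply]
    have h1 : ∀ l, Q0 j l * V l i = ((nu (e j) : ℝ) : ℂ) * (star (V l (e j)) * V l i) :=
      fun l => by rw [hQ0def]; ring
    rw [Finset.sum_congr rfl fun l _ => h1 l, ← Finset.mul_sum, hVorth (e j) i]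
    by_cases h : e j = i <;> simp [h]
  have hcompval : stpcaObj b t k X Y lam U0 Q0
      = (Matrix.trace (X * Xᴴ)).re - ∑ i ∈ T, hh i := by
    rw [main U0 Q0 hU0U0]
    have hterm : ∀ j : Fin k,
        (∑ i, p2 i * ‖(Q0 * V) j i‖ ^ 2)
          - 2 * (∑ i, s i * ((Q0 * V) j i * star ((U0 * V) j i)).re)
          + lam * Real.sqrt (∑ i, ‖(Q0 * V) j i‖ ^ 2) = -hh (e j) := by
      intro j
      have hs1 : ∑ i, p2 i * ‖(Q0 * V) j i‖ ^ 2 = p2 (e j) * nu (e j) ^ 2 := by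
        have h1 : ∀ i, p2 i * ‖(Q0 * V) j i‖ ^ 2
            = if e j = i then p2 i * nu (e j) ^ 2 else 0 := by
          intro i
          rw [hR0 j i]
          by_cases h : e j = i
          · simp only [h, if_true]
            rw [Complex.norm_real, Real.norm_eq_abs, sq_abs]
          · simp [h]
        rw [Finset.sum_congr rfl fun i _ => h1 i, Finset.sum_ite_eq]
        simp
      have hs2 : ∑ i, s i * ((Q0 * V) j i * star ((U0 * V) j i)).re = s (e j) * nu (e j) := by
        have h1 : ∀ i, s i * ((Q0 * V) j i * star ((U0 * V) j i)).re
            = if e j = i then s i * nu (e j) else 0 := by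
          intro i
          rw [hR0 j i, hG0 j i]
          by_cases h : e j = i
          · simp [h]
          · simp [h]
        rw [Finset.sum_congr rfl fun i _ => h1 i, Finset.sum_ite_eq]
        simp
      have hs3 : Real.sqrt (∑ i, ‖(Q0 * V) j i‖ ^ 2) = nu (e j) := by
        have h1 : ∀ i, ‖(Q0 * V) j i‖ ^ 2 = if e j = i then nu (e j) ^ 2 else 0 := by
          intro i
          rw [hR0 j i]
          by_cases h : e j = i
          · simp only [h, if_true]
            rw [Complex.norm_real, Real.norm_eq_abs, sq_abs]
          · simp [h]
        rw [Finset.sum_congr rfl fun i _ => h1 i, Finset.sum_ite_eq]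
        simp [Real.sqrt_sq (hnunn (e j))]
      rw [hs1, hs2, hs3]
      have := quad_at_nu lam (p2 (e j)) (s (e j)) hlam (hp2nn (e j)) (hps (e j))
      simp only [hhdef, hnudef]
      linarith [this]
    rw [Finset.sum_congr rfl fun j _ => hterm j]
    have himage : Finset.image e Finset.univ = T := by
      apply Finset.eq_of_subset_of_card_le
      · intro x hx
        obtain ⟨j, _, rfl⟩ := Finset.mem_image.mp hx
        exact heT j
      · rw [hTcard, Finset.card_image_of_injective _ heinj, Finset.card_univ, Fintype.card_fin]
    have himg : ∑ j : Fin k, hh (e j) = ∑ i ∈ T, hh i := by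
      rw [← himage, Finset.sum_image (fun x _ y _ hxy => heinj hxy)]
    rw [Finset.sum_neg_distrib, himg]
    ring
  -- the chain of inequalities collapses
  have hchain := hmin U0 Q0 hU0U0
  rw [hFopt, hcompval] at hchain
  have hknap : ∑ i, hh i * w i ≤ ∑ i ∈ T, hh i :=
    knapsack b hh w T hhnn hw0 hw1 (by rw [hTcard]; exact hwsum) hTtop
  have hGw : ∑ j : Fin k, ∑ i, hh i * ‖G j i‖ ^ 2 = ∑ i, hh i * w i := by
    rw [Finset.sum_comm]
    refine Finset.sum_congr rfl fun i _ => ?_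
    rw [hwdef, ← Finset.mul_sum]
  have hzero : ∀ j ∈ Finset.univ, rowTerm j + ∑ i, hh i * ‖G j i‖ ^ 2 = 0 := by
    apply (Finset.sum_eq_zero_iff_of_nonneg (fun j _ => hrow_nonneg j)).mp
    have hle : ∑ j : Fin k, (rowTerm j + ∑ i, hh i * ‖G j i‖ ^ 2) ≤ 0 := by
      rw [Finset.sum_add_distrib, hGw]
      linarith [hknap, hchain]
    have hge : (0:ℝ) ≤ ∑ j : Fin k, (rowTerm j + ∑ i, hh i * ‖G j i‖ ^ 2) :=
      Finset.sum_nonneg fun j _ => hrow_nonneg j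
    linarith
  -- extraction of the aligned structure
  set cc : Fin k → ℝ := fun j => Real.sqrt (∑ i, ‖R j i‖ ^ 2) with hccdef
  have hccnn : ∀ j, 0 ≤ cc j := fun j => Real.sqrt_nonneg _
  have hrowEq : ∀ j i, R j i = ((cc j : ℝ) : ℂ) * G j i := by
    intro j
    have h0 := hzero j (Finset.mem_univ j)
    rw [hdecomp j] at h0
    have hA : 0 ≤ Real.sqrt (∑ i, ‖R j i‖ ^ 2) - ∑ i, ‖G j i‖ * ‖R j i‖ := by
      linarith [hpiece1 j]
    have hB : 0 ≤ ∑ i, s i * (‖G j i‖ * ‖R j i‖ - (R j i * star (G j i)).re) :=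
      Finset.sum_nonneg fun i _ => hpiece2 j i
    have hC : 0 ≤ ∑ i, (p2 i * ‖R j i‖ ^ 2 - (2 * s i - lam) * (‖G j i‖ * ‖R j i‖)
        + hh i * ‖G j i‖ ^ 2) := Finset.sum_nonneg fun i _ => hpiece3 j i
    have hlamA : 0 ≤ lam * (Real.sqrt (∑ i, ‖R j i‖ ^ 2) - ∑ i, ‖G j i‖ * ‖R j i‖) :=
      mul_nonneg hlam.le hA
    have hA0 : Real.sqrt (∑ i, ‖R j i‖ ^ 2) - ∑ i, ‖G j i‖ * ‖R j i‖ = 0 := by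
      have hlamA0 : lam * (Real.sqrt (∑ i, ‖R j i‖ ^ 2) - ∑ i, ‖G j i‖ * ‖R j i‖) = 0 := by
        linarith
      rcases mul_eq_zero.mp hlamA0 with h | h
      · exact absurd h (ne_of_gt hlam)
      · exact h
    have hB0 : ∑ i, s i * (‖G j i‖ * ‖R j i‖ - (R j i * star (G j i)).re) = 0 := by linarith
    have hC0 : ∑ i, (p2 i * ‖R j i‖ ^ 2 - (2 * s i - lam) * (‖G j i‖ * ‖R j i‖)
        + hh i * ‖G j i‖ ^ 2) = 0 := by linarith
    have hBi := (Finset.sum_eq_zero_iff_of_nonneg (fun i _ => hpiece2 j i)).mp hB0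
    have hCi := (Finset.sum_eq_zero_iff_of_nonneg (fun i _ => hpiece3 j i)).mp hC0
    have hnueq : ∀ i, ‖R j i‖ = cc j * ‖G j i‖ := by
      have := cs_eq b (fun i => ‖G j i‖) (fun i => ‖R j i‖) (hrowG j) (by linarith [hA0])
      intro i
      rw [hccdef]
      exact this i
    intro i
    by_cases hc0 : cc j = 0
    · have hR00 : ‖R j i‖ = 0 := by rw [hnueq i, hc0, zero_mul]
      rw [norm_eq_zero.mp hR00, hc0]
      simp
    · have hcpos : 0 < cc j := lt_of_le_of_ne (hccnn j) (Ne.symm hc0)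
      by_cases hg0 : G j i = 0
      · have hR00 : ‖R j i‖ = 0 := by rw [hnueq i, hg0, norm_zero, mul_zero]
        rw [norm_eq_zero.mp hR00, hg0, mul_zero]
      · have hga : 0 < ‖G j i‖ := norm_pos_iff.mpr hg0
        by_cases hs0 : s i = 0
        · exfalso
          have hhi0 : hh i = 0 := by
            rw [hhdef]
            simp only
            rw [hs0]
            exact hF_of_s_eq_zero lam (p2 i) hlam
          have hq := hCi i (Finset.mem_univ i)
          rw [hs0, hhi0] at hq
          have hp2t : 0 ≤ p2 i * ‖R j i‖ ^ 2 := mul_nonneg (hp2nn i) (sq_nonneg _)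
          have hlt : 0 < ‖G j i‖ * ‖R j i‖ := by
            rw [hnueq i]
            exact mul_pos hga (mul_pos hcpos hga)
          nlinarith [hq, hp2t, hlt, hlam]
        · have hspos : 0 < s i := lt_of_le_of_ne (hsnn i) (Ne.symm hs0)
          have hb := hBi i (Finset.mem_univ i)
          have hre : (R j i * star (G j i)).re = ‖G j i‖ * ‖R j i‖ := by
            rcases mul_eq_zero.mp hb with h | h
            · exact absurd h hs0
            · linarith
          have hnz : ‖R j i * star (G j i)‖ = ‖G j i‖ * ‖R j i‖ := by
            rw [norm_mul, norm_star]
            ring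
          have hzeq : R j i * star (G j i) = ((‖G j i‖ * ‖R j i‖ : ℝ) : ℂ) := by
            have := complex_eq_of_re_eq_norm (R j i * star (G j i)) (by rw [hre, hnz])
            rw [this, hnz]
          have hcast : R j i * star (G j i) = ((cc j : ℝ) : ℂ) * ((‖G j i‖ ^ 2 : ℝ) : ℂ) := by
            rw [hzeq, hnueq i]
            push_cast
            ring
          have hGG2 : star (G j i) * G j i = ((‖G j i‖ ^ 2 : ℝ) : ℂ) := by
            rw [mul_comm, show star (G j i) = (starRingEnd ℂ) (G j i) from rfl,
              Complex.mul_conj, Complex.normSq_eq_norm_sq]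
          have hGne : ((‖G j i‖ ^ 2 : ℝ) : ℂ) ≠ 0 := by
            simp only [ne_eq, Complex.ofReal_eq_zero]
            positivity
          apply mul_right_cancel₀ hGne
          calc R j i * ((‖G j i‖ ^ 2 : ℝ) : ℂ) = R j i * (star (G j i) * G j i) := by rw [hGG2]
            _ = (R j i * star (G j i)) * G j i := by ring
            _ = (((cc j : ℝ) : ℂ) * ((‖G j i‖ ^ 2 : ℝ) : ℂ)) * G j i := by rw [hcast]
            _ = ((cc j : ℝ) : ℂ) * G j i * ((‖G j i‖ ^ 2 : ℝ) : ℂ) := by ring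
  -- assemble the PSD factorisation
  have hQR : Qstar = R * Vᴴ := by rw [hRdef, Matrix.mul_assoc, hV1, Matrix.mul_one]
  have hUG : Ustar = G * Vᴴ := by rw [hGdef, Matrix.mul_assoc, hV1, Matrix.mul_one]
  have hRG : R = Matrix.diagonal (fun j => ((cc j : ℝ) : ℂ)) * G := by
    ext j i
    rw [Matrix.diagonal_mul]
    exact hrowEq j i
  have hQid : Qstar = Matrix.diagonal (fun j => ((cc j : ℝ) : ℂ)) * Ustar := by
    rw [hQR, hRG, hUG, Matrix.mul_assoc]
  rw [hQid]
  have hfact : Ustarᴴ * (Matrix.diagonal (fun j => ((cc j : ℝ) : ℂ)) * Ustar)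
      = (Matrix.diagonal (fun j => ((Real.sqrt (cc j) : ℝ) : ℂ)) * Ustar)ᴴ
        * (Matrix.diagonal (fun j => ((Real.sqrt (cc j) : ℝ) : ℂ)) * Ustar) := by
    rw [Matrix.conjTranspose_mul, Matrix.diagonal_conjTranspose]
    simp only [Pi.star_def, Matrix.mul_assoc]
    rw [← Matrix.mul_assoc (Matrix.diagonal _) (Matrix.diagonal _) Ustar,
      Matrix.diagonal_mul_diagonal]
    have hdd : (fun i => star ((Real.sqrt (cc i) : ℝ) : ℂ) * ((Real.sqrt (cc i) : ℝ) : ℂ))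
        = fun j => ((cc j : ℝ) : ℂ) := by
      funext j
      rw [Complex.star_def, Complex.conj_ofReal, ← Complex.ofReal_mul,
        Real.mul_self_sqrt (hccnn j)]
    rw [hdd]
  rw [hfact]
  exact Matrix.posSemidef_conjTranspose_mul_self _
end

section
/- Let S ∈ ℝ^{d×d} be symmetric, let λ > 0, ε > 0, and η ∈ ℝ. Let A ∈ ℝ^{d×d} have columns a₁, …, a_d, and let W ∈ ℝ^{d×d} be the diagonal matrix with j-th diagonal entry W_jj = 1/(2√(‖a_j‖₂² + ε)). Define J(B) = Tr(B S Bᵀ) − 2 Tr(S B) + η Tr(B). If Ã ∈ ℝ^{d×d}, with columns ã₁, …, ã_d, satisfies J(Ã) + λ Tr(Ã W Ãᵀ) ≤ J(A) + λ Tr(A W Aᵀ), then J(Ã) + λ Σ_{j=1}^{d} √(‖ã_j‖₂² + ε) ≤ J(A) + λ Σ_{j=1}^{d} √(‖a_j‖₂² + ε). -/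
open Matrix

lemma trace_mul_diag_mul_transpose {d : ℕ} (B : Matrix (Fin d) (Fin d) ℝ)
    (w : Fin d → ℝ) :
    Matrix.trace (B * Matrix.diagonal w * Bᵀ) = ∑ j, w j * ∑ i, (B i j) ^ 2 := by
  unfold Matrix.trace Matrix.diag
  simp only [Matrix.mul_apply, Matrix.mul_diagonal, Matrix.transpose_apply]
  rw [Finset.sum_comm]
  refine Finset.sum_congr rfl fun j _ => ?_
  rw [Finset.mul_sum]
  refine Finset.sum_congr rfl fun i _ => ?_
  simp only [Matrix.diagonal_apply, mul_ite, mul_zero, Finset.sum_ite_eq, Finset.sum_ite_eq',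
    Finset.mem_univ, if_true]
  ring

lemma key_ineq {u v : ℝ} (hu : 0 < u) (hv : 0 < v) :
    Real.sqrt u - u / (2 * Real.sqrt v) ≤ Real.sqrt v - v / (2 * Real.sqrt v) := by
  have hsv : 0 < Real.sqrt v := Real.sqrt_pos.mpr hv
  have h1 : Real.sqrt v * Real.sqrt v = v := Real.mul_self_sqrt hv.le
  have h2 : Real.sqrt u * Real.sqrt u = u := Real.mul_self_sqrt hu.le
  have ha : u / (2 * Real.sqrt v) * (2 * Real.sqrt v) = u :=
    div_mul_cancel₀ _ (by positivity)
  have hb : v / (2 * Real.sqrt v) * (2 * Real.sqrt v) = v :=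
    div_mul_cancel₀ _ (by positivity)
  nlinarith [sq_nonneg (Real.sqrt u - Real.sqrt v), Real.sqrt_nonneg u,
    mul_pos hsv hsv]

/-- Per-subproblem descent lemma (heart of Theorem 2 of the paper): with
`J(B) = Tr(B S Bᵀ) − 2 Tr(S B) + η Tr(B)` and `W` the diagonal reweighting matrix
`W_jj = 1/(2√(‖a_j‖₂² + ε))` built from the columns of `A`, if
`J(Ã) + λ Tr(Ã W Ãᵀ) ≤ J(A) + λ Tr(A W Aᵀ)` then
`J(Ã) + λ Σ_j √(‖ã_j‖₂² + ε) ≤ J(A) + λ Σ_j √(‖a_j‖₂² + ε)`. -/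
theorem stmt_7 (d : ℕ) (S : Matrix (Fin d) (Fin d) ℝ) (hS : S.IsSymm)
    (lam ε η : ℝ) (hlam : 0 < lam) (hε : 0 < ε)
    (A Atilde : Matrix (Fin d) (Fin d) ℝ)
    (W : Matrix (Fin d) (Fin d) ℝ)
    (hW : W = Matrix.diagonal
      (fun j => 1 / (2 * Real.sqrt ((∑ i, (A i j) ^ 2) + ε))))
    (h : (Matrix.trace (Atilde * S * Atildeᵀ) - 2 * Matrix.trace (S * Atilde)
            + η * Matrix.trace Atilde) + lam * Matrix.trace (Atilde * W * Atildeᵀ) ≤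
         (Matrix.trace (A * S * Aᵀ) - 2 * Matrix.trace (S * A)
            + η * Matrix.trace A) + lam * Matrix.trace (A * W * Aᵀ)) :
    (Matrix.trace (Atilde * S * Atildeᵀ) - 2 * Matrix.trace (S * Atilde)
        + η * Matrix.trace Atilde)
      + lam * ∑ j, Real.sqrt ((∑ i, (Atilde i j) ^ 2) + ε) ≤
    (Matrix.trace (A * S * Aᵀ) - 2 * Matrix.trace (S * A)
        + η * Matrix.trace A)
      + lam * ∑ j, Real.sqrt ((∑ i, (A i j) ^ 2) + ε) := by
  set w : Fin d → ℝ := fun j => 1 / (2 * Real.sqrt ((∑ i, (A i j) ^ 2) + ε)) with hw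
  rw [hW, trace_mul_diag_mul_transpose Atilde w, trace_mul_diag_mul_transpose A w] at h
  -- key pointwise bound
  have key : ∀ j, Real.sqrt ((∑ i, (Atilde i j) ^ 2) + ε)
      - w j * ((∑ i, (Atilde i j) ^ 2) + ε) ≤
      Real.sqrt ((∑ i, (A i j) ^ 2) + ε) - w j * ((∑ i, (A i j) ^ 2) + ε) := by
    intro j
    have hu : (0:ℝ) < (∑ i, (Atilde i j) ^ 2) + ε := by positivity
    have hv : (0:ℝ) < (∑ i, (A i j) ^ 2) + ε := by positivity
    have := key_ineq hu hv
    simp only [hw]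
    rw [one_div, inv_mul_eq_div, inv_mul_eq_div]
    linarith
  have hsum : ∑ j, (Real.sqrt ((∑ i, (Atilde i j) ^ 2) + ε)
      - w j * ((∑ i, (Atilde i j) ^ 2) + ε)) ≤
      ∑ j, (Real.sqrt ((∑ i, (A i j) ^ 2) + ε) - w j * ((∑ i, (A i j) ^ 2) + ε)) :=
    Finset.sum_le_sum fun j _ => key j
  have expand : ∀ B : Matrix (Fin d) (Fin d) ℝ,
      ∑ j, (Real.sqrt ((∑ i, (B i j) ^ 2) + ε) - w j * ((∑ i, (B i j) ^ 2) + ε)) =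
      (∑ j, Real.sqrt ((∑ i, (B i j) ^ 2) + ε)) - (∑ j, w j * ∑ i, (B i j) ^ 2)
      - ∑ j, w j * ε := by
    intro B
    simp only [mul_add, Finset.sum_sub_distrib, Finset.sum_add_distrib]
    ring
  rw [expand Atilde, expand A] at hsum
  nlinarith [hsum, h, hlam]
end
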